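/- If an intermediate first-order logic L admits structural Skolemization (i.e., for every closed formula A, L proves A if and only if L proves the structural Skolemization of A), then L contains the quantifier shift principles CD, ED, and SW. -/

import Mathlib

/-!
Structural Skolemization replaces a strong quantifier by a Skolem term, that is, by one particular
instance, so intuitionistically a formula implies its positive Skolemization and is implied by its
negative one. For a quantifier shift such as `CD`, `∀x (A ∨ B) → ∀x A ∨ B`, the strong quantifier
`∀x A` becomes `A[f/x]` for a fresh constant `f`, and the Skolem form is provable in `IQC` because
`∀x (A ∨ B) → A[f/x] ∨ B` is; likewise for `ED` and `SW`. The Skolemization of the universal closure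
of a quantifier shift is that of an instance by fresh constants, which is again a quantifier shift,
so the hypothesis on `L` puts the closure, hence the shift itself, into `L`.
-/

/-- First-order terms: variables and function symbols (indexed by naturals)
applied to lists of terms. Constants are 0-ary function symbols. -/
inductive Term : Type
  | var : ℕ → Term
  | func : ℕ → List Term → Term

mutual
  /-- Substitution of the term `s` for the variable `x` in a term. -/
  def Term.subst (x : ℕ) (s : Term) : Term → Term
    | .var y => if y = x then s else .var y
    | .func f ts => .func f (Term.substList x s ts)
  def Term.substList (x : ℕ) (s : Term) : List Term → List Term
    | [] => []
    | t :: ts => Term.subst x s t :: Term.substList x s ts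
end

/-- First-order formulas of the language of `IQC`. -/
inductive Fml : Type
  | bot : Fml
  | top : Fml
  | rel : ℕ → List Term → Fml
  | and : Fml → Fml → Fml
  | or : Fml → Fml → Fml
  | imp : Fml → Fml → Fml
  | all : ℕ → Fml → Fml
  | ex : ℕ → Fml → Fml

/-- Substitution of a term for a (free) variable in a formula. -/
def Fml.subst (x : ℕ) (s : Term) : Fml → Fml
  | .bot => .bot
  | .top => .top
  | .rel r ts => .rel r (Term.substList x s ts)
  | .and A B => .and (A.subst x s) (B.subst x s)
  | .or A B => .or (A.subst x s) (B.subst x s)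
  | .imp A B => .imp (A.subst x s) (B.subst x s)
  | .all y A => if y = x then .all y A else .all y (A.subst x s)
  | .ex y A => if y = x then .ex y A else .ex y (A.subst x s)

/-- The variable `x` occurs in a term. -/
inductive Term.HasVar (x : ℕ) : Term → Prop
  | var : Term.HasVar x (.var x)
  | func {f : ℕ} {ts : List Term} {t : Term} :
      t ∈ ts → Term.HasVar x t → Term.HasVar x (.func f ts)

/-- The variable `x` occurs free in a formula. -/
inductive Fml.FreeIn (x : ℕ) : Fml → Prop
  | rel {r ts t} : t ∈ ts → Term.HasVar x t → Fml.FreeIn x (.rel r ts)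
  | andL {A B} : FreeIn x A → FreeIn x (.and A B)
  | andR {A B} : FreeIn x B → FreeIn x (.and A B)
  | orL {A B} : FreeIn x A → FreeIn x (.or A B)
  | orR {A B} : FreeIn x B → FreeIn x (.or A B)
  | impL {A B} : FreeIn x A → FreeIn x (.imp A B)
  | impR {A B} : FreeIn x B → FreeIn x (.imp A B)
  | all {y A} : y ≠ x → FreeIn x A → FreeIn x (.all y A)
  | ex {y A} : y ≠ x → FreeIn x A → FreeIn x (.ex y A)

/-- The function symbol `f` occurs in a term. -/
inductive Term.HasFunc (f : ℕ) : Term → Prop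
  | self {ts} : Term.HasFunc f (.func f ts)
  | arg {g ts t} : t ∈ ts → Term.HasFunc f t → Term.HasFunc f (.func g ts)

/-- The function symbol `f` occurs in a formula. -/
inductive Fml.HasFunc (f : ℕ) : Fml → Prop
  | rel {r ts t} : t ∈ ts → Term.HasFunc f t → Fml.HasFunc f (.rel r ts)
  | andL {A B} : HasFunc f A → HasFunc f (.and A B)
  | andR {A B} : HasFunc f B → HasFunc f (.and A B)
  | orL {A B} : HasFunc f A → HasFunc f (.or A B)
  | orR {A B} : HasFunc f B → HasFunc f (.or A B)
  | impL {A B} : HasFunc f A → HasFunc f (.imp A B)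
  | impR {A B} : HasFunc f B → HasFunc f (.imp A B)
  | all {y A} : HasFunc f A → HasFunc f (.all y A)
  | ex {y A} : HasFunc f A → HasFunc f (.ex y A)

/-- Hilbert-style derivability for intuitionistic predicate logic `IQC`
from an extra set of axioms `L`.  `Deriv ∅` is provability in `IQC`. -/
inductive Deriv (L : Set Fml) : Fml → Prop
  | ax {A} : A ∈ L → Deriv L A
  | impK {A B} : Deriv L (.imp A (.imp B A))
  | impS {A B C} :
      Deriv L (.imp (.imp A (.imp B C)) (.imp (.imp A B) (.imp A C)))
  | andI {A B} : Deriv L (.imp A (.imp B (.and A B)))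
  | andE1 {A B} : Deriv L (.imp (.and A B) A)
  | andE2 {A B} : Deriv L (.imp (.and A B) B)
  | orI1 {A B} : Deriv L (.imp A (.or A B))
  | orI2 {A B} : Deriv L (.imp B (.or A B))
  | orE {A B C} :
      Deriv L (.imp (.imp A C) (.imp (.imp B C) (.imp (.or A B) C)))
  | botE {A} : Deriv L (.imp .bot A)
  | topI : Deriv L .top
  | allE {x A} (t : Term) : Deriv L (.imp (.all x A) (A.subst x t))
  | exI {x A} (t : Term) : Deriv L (.imp (A.subst x t) (.ex x A))
  | allShift {x A B} : ¬ Fml.FreeIn x B →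
      Deriv L (.imp (.all x (.imp B A)) (.imp B (.all x A)))
  | exShift {x A B} : ¬ Fml.FreeIn x B →
      Deriv L (.imp (.all x (.imp A B)) (.imp (.ex x A) B))
  | mp {A B} : Deriv L (.imp A B) → Deriv L A → Deriv L B
  | gen {x A} : Deriv L A → Deriv L (.all x A)

/-- Size of a formula (number of nodes), used as fuel for Skolemization. -/
def Fml.size : Fml → ℕ
  | .bot => 1
  | .top => 1
  | .rel _ _ => 1
  | .and A B => A.size + B.size + 1
  | .or A B => A.size + B.size + 1
  | .imp A B => A.size + B.size + 1
  | .all _ A => A.size + 1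
  | .ex _ A => A.size + 1

/-- All function symbols occurring in a term have index `< n`. -/
inductive Term.FuncBelow (n : ℕ) : Term → Prop
  | var (x) : Term.FuncBelow n (.var x)
  | func {f ts} : f < n → (∀ t ∈ ts, Term.FuncBelow n t) →
      Term.FuncBelow n (.func f ts)

/-- All function symbols occurring in a formula have index `< n`
(so that symbols with index `≥ n` are fresh for it). -/
def Fml.FuncBelow (n : ℕ) : Fml → Prop
  | .bot => True
  | .top => True
  | .rel _ ts => ∀ t ∈ ts, Term.FuncBelow n t
  | .and A B => A.FuncBelow n ∧ B.FuncBelow n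
  | .or A B => A.FuncBelow n ∧ B.FuncBelow n
  | .imp A B => A.FuncBelow n ∧ B.FuncBelow n
  | .all _ A => A.FuncBelow n
  | .ex _ A => A.FuncBelow n

/-- One-pass structural Skolemization.  `skAux fuel pos xs c A` Skolemizes `A`
occurring with polarity `pos` (`true` = positive), in the scope of the weakly
quantified variables `xs`, using fresh Skolem function symbols `c, c+1, …`;
it returns the Skolemized formula together with the next fresh symbol.
Strong quantifiers (positive `∀`, negative `∃`) are removed, the bound
variable being replaced by a fresh Skolem function applied to the weakly
quantified variables of the scope. -/
def skAux : ℕ → Bool → List ℕ → ℕ → Fml → Fml × ℕ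
  | 0, _, _, c, A => (A, c)
  | Nat.succ n, pos, xs, c, A =>
    match A with
    | .bot => (.bot, c)
    | .top => (.top, c)
    | .rel r ts => (.rel r ts, c)
    | .and A₁ A₂ =>
        let p₁ := skAux n pos xs c A₁
        let p₂ := skAux n pos xs p₁.2 A₂
        (.and p₁.1 p₂.1, p₂.2)
    | .or A₁ A₂ =>
        let p₁ := skAux n pos xs c A₁
        let p₂ := skAux n pos xs p₁.2 A₂
        (.or p₁.1 p₂.1, p₂.2)
    | .imp A₁ A₂ =>
        let p₁ := skAux n (!pos) xs c A₁
        let p₂ := skAux n pos xs p₁.2 A₂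
        (.imp p₁.1 p₂.1, p₂.2)
    | .all y A₁ =>
        if pos then
          skAux n pos xs (c + 1) (A₁.subst y (.func c (xs.map Term.var)))
        else
          let p := skAux n pos (xs ++ [y]) c A₁
          (.all y p.1, p.2)
    | .ex y A₁ =>
        if pos then
          let p := skAux n pos (xs ++ [y]) c A₁
          (.ex y p.1, p.2)
        else
          skAux n pos xs (c + 1) (A₁.subst y (.func c (xs.map Term.var)))

/-- The structural Skolem form `A^S` of `A`, using the symbols `c, c+1, …`
(which are fresh whenever `Fml.FuncBelow c A`) as Skolem functions. -/
def skolemizeFrom (c : ℕ) (A : Fml) : Fml :=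
  (skAux A.size true [] c A).1

/-- A formula is closed if it has no free variables. -/
def Fml.Closed (A : Fml) : Prop := ∀ x, ¬ Fml.FreeIn x A

/-- Classical predicate logic: `IQC` plus all instances of double negation
elimination. -/
def CQC : Set Fml :=
  {A | Deriv {B | ∃ C : Fml, B = .imp (.imp (.imp C .bot) .bot) C} A}

/-- An intermediate first-order logic: a set of formulas between `IQC` and
`CQC`, closed under the rules of `IQC`. -/
def IsIntermediate (L : Set Fml) : Prop :=
  (∀ A, Deriv ∅ A → A ∈ L) ∧ (∀ A ∈ L, A ∈ CQC) ∧ (∀ A, Deriv L A → A ∈ L)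

open Filter

namespace Term

@[elab_as_elim]
theorem induction {P : Term → Prop} (var : ∀ x, P (.var x))
    (func : ∀ f ts, (∀ t ∈ ts, P t) → P (.func f ts)) : ∀ t, P t
  | .var x => var x
  | .func f ts => func f ts fun t _ => induction var func t
decreasing_by have := List.sizeOf_lt_of_mem ‹t ∈ ts›; simp_wf; omega

theorem substList_eq_map (x : ℕ) (s : Term) :
    ∀ ts : List Term, substList x s ts = ts.map (subst x s)
  | [] => rfl
  | t :: ts => by rw [substList, substList_eq_map x s ts, List.map_cons]

theorem subst_func (x : ℕ) (s : Term) (f : ℕ) (ts : List Term) :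
    subst x s (.func f ts) = .func f (ts.map (subst x s)) := by
  rw [subst, substList_eq_map]

theorem subst_var_self (x : ℕ) (t : Term) : subst x (.var x) t = t := by
  induction t using Term.induction with
  | var y => by_cases h : y = x <;> simp [subst, h]
  | func f ts ih => rw [subst_func, List.map_congr_left ih, List.map_id']

theorem subst_of_not_hasVar {x : ℕ} (s : Term) {t : Term} (h : ¬ HasVar x t) :
    subst x s t = t := by
  induction t using Term.induction with
  | var y =>
    have hy : y ≠ x := by rintro rfl; exact h .var
    simp [subst, hy]
  | func f ts ih =>
    rw [subst_func, List.map_congr_left fun t ht => ih t ht fun hx => h (.func ht hx),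
      List.map_id']

theorem hasVar_or_hasVar_of_hasVar_subst {x y : ℕ} {s t : Term} (h : HasVar y (subst x s t)) :
    HasVar y t ∨ HasVar y s := by
  induction t using Term.induction with
  | var z =>
    by_cases e : z = x
    · simp only [subst, e, if_true] at h; exact .inr h
    · simp only [subst, e, if_false] at h; exact .inl h
  | func f ts ih =>
    rw [subst_func] at h
    cases h with
    | func hmem hu =>
      obtain ⟨t, ht, rfl⟩ := List.mem_map.1 hmem
      exact (ih t ht hu).imp_left (.func ht)

theorem eventually_funcBelow (t : Term) : ∀ᶠ n in atTop, FuncBelow n t := by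
  induction t using Term.induction with
  | var x => exact .of_forall fun _ => .var x
  | func f ts ih =>
    filter_upwards [eventually_gt_atTop f, ts.finite_toSet.eventually_all.2 ih] with n hf hts
    exact .func hf hts

theorem finite_hasVar (t : Term) : {x | HasVar x t}.Finite := by
  induction t using Term.induction with
  | var y => exact (Set.finite_singleton y).subset (by rintro x ⟨⟩; rfl)
  | func f ts ih =>
    refine (ts.finite_toSet.biUnion ih).subset ?_
    rintro x (_ | ⟨ht, hx⟩)
    exact Set.mem_biUnion ht hx

end Term

namespace Fml

section FreeIn

variable {x y : ℕ} {A B : Fml}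

@[simp] theorem not_freeIn_bot : ¬ FreeIn x .bot := nofun

@[simp] theorem not_freeIn_top : ¬ FreeIn x .top := nofun

@[simp] theorem freeIn_rel {r : ℕ} {ts : List Term} :
    FreeIn x (.rel r ts) ↔ ∃ t ∈ ts, Term.HasVar x t :=
  ⟨fun | .rel ht hx => ⟨_, ht, hx⟩, fun ⟨_, ht, hx⟩ => .rel ht hx⟩

@[simp] theorem freeIn_and : FreeIn x (.and A B) ↔ FreeIn x A ∨ FreeIn x B :=
  ⟨fun | .andL h => .inl h | .andR h => .inr h, fun | .inl h => .andL h | .inr h => .andR h⟩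

@[simp] theorem freeIn_or : FreeIn x (.or A B) ↔ FreeIn x A ∨ FreeIn x B :=
  ⟨fun | .orL h => .inl h | .orR h => .inr h, fun | .inl h => .orL h | .inr h => .orR h⟩

@[simp] theorem freeIn_imp : FreeIn x (.imp A B) ↔ FreeIn x A ∨ FreeIn x B :=
  ⟨fun | .impL h => .inl h | .impR h => .inr h, fun | .inl h => .impL h | .inr h => .impR h⟩

@[simp] theorem freeIn_all : FreeIn x (.all y A) ↔ y ≠ x ∧ FreeIn x A :=
  ⟨fun | .all hy h => ⟨hy, h⟩, fun ⟨hy, h⟩ => .all hy h⟩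

@[simp] theorem freeIn_ex : FreeIn x (.ex y A) ↔ y ≠ x ∧ FreeIn x A :=
  ⟨fun | .ex hy h => ⟨hy, h⟩, fun ⟨hy, h⟩ => .ex hy h⟩

end FreeIn

theorem subst_var_self (x : ℕ) (A : Fml) : A.subst x (.var x) = A := by
  induction A with
  | bot | top => rfl
  | rel r ts =>
    simp [subst, Term.substList_eq_map, List.map_congr_left fun t _ => Term.subst_var_self x t]
  | and A B ihA ihB | or A B ihA ihB | imp A B ihA ihB => simp [subst, ihA, ihB]
  | all y A ih | ex y A ih => by_cases h : y = x <;> simp [subst, h, ih]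

theorem size_subst (x : ℕ) (s : Term) (A : Fml) : (A.subst x s).size = A.size := by
  induction A with
  | bot | top | rel => rfl
  | and A B ihA ihB | or A B ihA ihB | imp A B ihA ihB => simp [subst, size, ihA, ihB]
  | all y A ih | ex y A ih => by_cases h : y = x <;> simp [subst, h, size, ih]

theorem one_le_size (A : Fml) : 1 ≤ A.size := by
  cases A <;> simp [size]

theorem subst_of_not_freeIn {x : ℕ} (s : Term) {A : Fml} (h : ¬ FreeIn x A) : A.subst x s = A := by
  induction A with
  | bot | top => rfl
  | rel r ts =>
    simp only [freeIn_rel, not_exists, not_and] at h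
    simp only [subst, Term.substList_eq_map]
    rw [List.map_congr_left fun t ht => Term.subst_of_not_hasVar s (h t ht), List.map_id']
  | and A B ihA ihB | or A B ihA ihB | imp A B ihA ihB =>
    simp only [freeIn_and, freeIn_or, freeIn_imp, not_or] at h
    simp [subst, ihA h.1, ihB h.2]
  | all y A ih | ex y A ih =>
    by_cases e : y = x
    · simp [subst, e]
    · simp only [freeIn_all, freeIn_ex, not_and] at h
      simp [subst, e, ih (h e)]

theorem freeIn_or_hasVar_of_freeIn_subst {x y : ℕ} {s : Term} {A : Fml}
    (h : FreeIn y (A.subst x s)) : FreeIn y A ∨ Term.HasVar y s := by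
  induction A with
  | bot | top => simp [subst] at h
  | rel r ts =>
    obtain ⟨_, hu, hy⟩ := freeIn_rel.1 h
    obtain ⟨t, ht, rfl⟩ := List.mem_map.1 (Term.substList_eq_map x s ts ▸ hu)
    exact (Term.hasVar_or_hasVar_of_hasVar_subst hy).imp_left fun hy => freeIn_rel.2 ⟨t, ht, hy⟩
  | and A B ihA ihB | or A B ihA ihB | imp A B ihA ihB =>
    simp only [subst, freeIn_and, freeIn_or, freeIn_imp] at h ⊢
    rcases h with h | h
    · exact (ihA h).imp_left .inl
    · exact (ihB h).imp_left .inr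
  | all z A ih | ex z A ih =>
    by_cases e : z = x
    · rw [subst, if_pos e] at h; exact .inl h
    · simp only [subst, e, if_false, freeIn_all, freeIn_ex] at h ⊢
      exact (ih h.2).imp_left (⟨h.1, ·⟩)

theorem not_freeIn_subst_const {x y c : ℕ} {A : Fml} (h : ¬ FreeIn x A) :
    ¬ FreeIn x (A.subst y (.func c [])) := fun hx =>
  (freeIn_or_hasVar_of_freeIn_subst hx).elim h nofun

theorem finite_freeIn (A : Fml) : {x | FreeIn x A}.Finite := by
  induction A with
  | bot | top => simp
  | rel r ts =>
    refine (ts.finite_toSet.biUnion fun t _ => t.finite_hasVar).subset ?_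
    intro x hx
    obtain ⟨t, ht, hx⟩ := freeIn_rel.1 hx
    exact Set.mem_biUnion ht hx
  | and A B ihA ihB | or A B ihA ihB | imp A B ihA ihB =>
    simpa only [freeIn_and, freeIn_or, freeIn_imp, Set.ofPred_or] using ihA.union ihB
  | all y A ih | ex y A ih => exact ih.subset fun x hx => by simp_all

theorem eventually_funcBelow (A : Fml) : ∀ᶠ n in atTop, A.FuncBelow n := by
  induction A with
  | bot | top => exact .of_forall fun _ => trivial
  | rel r ts => exact ts.finite_toSet.eventually_all.2 fun t _ => t.eventually_funcBelow
  | and A B ihA ihB | or A B ihA ihB | imp A B ihA ihB => exact ihA.and ihB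
  | all y A ih | ex y A ih => exact ih

def alls (l : List ℕ) (A : Fml) : Fml := l.foldr .all A

def substConsts : List ℕ → ℕ → Fml → Fml
  | [], _, A => A
  | y :: ys, c, A => substConsts ys (c + 1) (A.subst y (.func c []))

theorem size_alls (l : List ℕ) (A : Fml) : (A.alls l).size = A.size + l.length := by
  induction l with
  | nil => rfl
  | cons y ys ih => simp only [alls, List.foldr_cons, size, List.length_cons] at ih ⊢; omega

theorem alls_subst {y : ℕ} {l : List ℕ} (hy : y ∉ l) (t : Term) (A : Fml) :
    (A.alls l).subst y t = (A.subst y t).alls l := by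
  induction l with
  | nil => rfl
  | cons z zs ih =>
    have hzy : z ≠ y := fun e => hy (e ▸ List.mem_cons_self)
    simp only [alls, List.foldr_cons] at ih ⊢
    rw [subst, if_neg hzy, ih (fun h => hy (List.mem_cons_of_mem _ h))]

theorem freeIn_alls {z : ℕ} {l : List ℕ} {A : Fml} :
    FreeIn z (A.alls l) ↔ z ∉ l ∧ FreeIn z A := by
  induction l with
  | nil => simp [alls]
  | cons y ys ih =>
    simp only [alls, List.foldr_cons, freeIn_all, List.mem_cons, not_or] at ih ⊢
    rw [ih]
    tauto

theorem size_substConsts : ∀ (l : List ℕ) (c : ℕ) (A : Fml), (A.substConsts l c).size = A.size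
  | [], _, _ => rfl
  | y :: ys, c, A => by rw [substConsts, size_substConsts ys, size_subst]

end Fml

namespace Deriv

variable {L : Set Fml} {A B C A' B' : Fml} {x : ℕ}

theorem trans (h₁ : Deriv L (.imp A B)) (h₂ : Deriv L (.imp B C)) : Deriv L (.imp A C) :=
  mp (mp impS (mp impK h₂)) h₁

theorem imp_self : Deriv L (.imp A A) :=
  mp (mp (impS (B := .imp A A)) impK) impK

theorem imp_comm (h : Deriv L (.imp A (.imp B C))) : Deriv L (.imp B (.imp A C)) :=
  trans impK (mp impS h)

theorem imp_mono (hA : Deriv L (.imp A' A)) (hB : Deriv L (.imp B B')) :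
    Deriv L (.imp (.imp A B) (.imp A' B')) :=
  trans (mp impS (mp impK hB)) (imp_comm (trans hA (imp_comm imp_self)))

theorem and_mono (hA : Deriv L (.imp A A')) (hB : Deriv L (.imp B B')) :
    Deriv L (.imp (.and A B) (.and A' B')) :=
  mp (mp impS (trans (trans andE1 hA) andI)) (trans andE2 hB)

theorem or_mono (hA : Deriv L (.imp A A')) (hB : Deriv L (.imp B B')) :
    Deriv L (.imp (.or A B) (.or A' B')) :=
  mp (mp orE (trans hA orI1)) (trans hB orI2)

theorem all_elim_self : Deriv L (.imp (.all x A) A) := by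
  simpa only [Fml.subst_var_self] using allE (L := L) (x := x) (A := A) (.var x)

theorem ex_intro_self : Deriv L (.imp A (.ex x A)) := by
  simpa only [Fml.subst_var_self] using exI (L := L) (x := x) (A := A) (.var x)

theorem all_mono (h : Deriv L (.imp A A')) : Deriv L (.imp (.all x A) (.all x A')) :=
  mp (allShift (by simp)) (gen (trans all_elim_self h))

theorem ex_mono (h : Deriv L (.imp A A')) : Deriv L (.imp (.ex x A) (.ex x A')) :=
  mp (exShift (by simp)) (gen (trans h ex_intro_self))

theorem subst (x : ℕ) (t : Term) (h : Deriv L A) : Deriv L (A.subst x t) :=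
  mp (allE t) (gen h)

theorem allE_or_of_not_freeIn (hB : ¬ B.FreeIn x) (t : Term) :
    Deriv L (.imp (.all x (.or A B)) (.or (A.subst x t) B)) := by
  simpa only [Fml.subst, Fml.subst_of_not_freeIn t hB] using allE (L := L) (x := x) (A := .or A B) t

theorem exI_imp (t : Term) :
    Deriv L (.imp (.imp (A.subst x t) (B.subst x t)) (.ex x (.imp A B))) :=
  exI (A := .imp A B) t

theorem subst_imp_of_not_freeIn (hB : ¬ B.FreeIn x) (t : Term) (h : Deriv L (.imp A B)) :
    Deriv L (.imp (A.subst x t) B) := by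
  simpa only [Fml.subst, Fml.subst_of_not_freeIn t hB] using subst x t h

theorem imp_subst_of_not_freeIn (hA : ¬ A.FreeIn x) (t : Term) (h : Deriv L (.imp A B)) :
    Deriv L (.imp A (B.subst x t)) := by
  simpa only [Fml.subst, Fml.subst_of_not_freeIn t hA] using subst x t h

theorem of_alls : ∀ {l : List ℕ}, Deriv L (A.alls l) → Deriv L A
  | [], h => h
  | _ :: _, h => of_alls (mp all_elim_self h)

end Deriv

section Skolemization

open Deriv

variable {L : Set Fml}

/-- A Skolem term is just one instance of the strong quantifier it replaces. -/
theorem deriv_skAux : ∀ (n : ℕ) (A : Fml) (xs : List ℕ) (c : ℕ), A.size ≤ n →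
    Deriv L (.imp A (skAux n true xs c A).1) ∧ Deriv L (.imp (skAux n false xs c A).1 A)
  | 0, A, _, _, h => absurd h (by have := A.one_le_size; omega)
  | n + 1, A, xs, c, h => by
    have ih := deriv_skAux n
    cases A with
    | bot | top | rel => exact ⟨imp_self, imp_self⟩
    | and A₁ A₂ =>
      simp only [Fml.size] at h
      exact ⟨and_mono (ih A₁ xs c (by omega)).1 (ih A₂ xs _ (by omega)).1,
        and_mono (ih A₁ xs c (by omega)).2 (ih A₂ xs _ (by omega)).2⟩
    | or A₁ A₂ =>
      simp only [Fml.size] at h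
      exact ⟨or_mono (ih A₁ xs c (by omega)).1 (ih A₂ xs _ (by omega)).1,
        or_mono (ih A₁ xs c (by omega)).2 (ih A₂ xs _ (by omega)).2⟩
    | imp A₁ A₂ =>
      simp only [Fml.size] at h
      exact ⟨imp_mono (ih A₁ xs c (by omega)).2 (ih A₂ xs _ (by omega)).1,
        imp_mono (ih A₁ xs c (by omega)).1 (ih A₂ xs _ (by omega)).2⟩
    | all y A =>
      simp only [Fml.size] at h
      have hs := Fml.size_subst y (.func c (xs.map .var)) A
      exact ⟨(allE _).trans (ih _ xs (c + 1) (by omega)).1,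
        all_mono (ih A (xs ++ [y]) c (by omega)).2⟩
    | ex y A =>
      simp only [Fml.size] at h
      have hs := Fml.size_subst y (.func c (xs.map .var)) A
      exact ⟨ex_mono (ih A (xs ++ [y]) c (by omega)).1,
        (ih _ xs (c + 1) (by omega)).2.trans (exI _)⟩

theorem deriv_imp_skAux_true {n : ℕ} {A : Fml} (xs : List ℕ) (c : ℕ) (h : A.size ≤ n) :
    Deriv L (.imp A (skAux n true xs c A).1) :=
  (deriv_skAux n A xs c h).1

theorem deriv_skAux_false_imp {n : ℕ} {A : Fml} (xs : List ℕ) (c : ℕ) (h : A.size ≤ n) :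
    Deriv L (.imp (skAux n false xs c A).1 A) :=
  (deriv_skAux n A xs c h).2

end Skolemization

theorem skolemizeFrom_alls : ∀ {l : List ℕ}, l.Nodup → ∀ (c : ℕ) (A : Fml),
    skolemizeFrom c (A.alls l) = skolemizeFrom (c + l.length) (A.substConsts l c)
  | [], _, c, A => rfl
  | y :: ys, h, c, A => by
    obtain ⟨hy, hys⟩ := List.nodup_cons.1 h
    have ih := skolemizeFrom_alls hys (c + 1) (A.subst y (.func c []))
    simp only [skolemizeFrom, Fml.size_alls, Fml.size_substConsts, Fml.size_subst] at ih ⊢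
    rw [List.length_cons, show c + (ys.length + 1) = c + 1 + ys.length by omega, Fml.substConsts,
      ← ih, ← Fml.alls_subst hy]
    rfl

theorem mem_of_forall_deriv_skolemizeFrom_substConsts {L : Set Fml}
    (hL : ∀ A, Deriv L A → A ∈ L)
    (hSk : ∀ A : Fml, A.Closed → ∀ c : ℕ, A.FuncBelow c → skolemizeFrom c A ∈ L → A ∈ L)
    {F : Fml} (hF : ∀ (l : List ℕ) (c c' : ℕ), Deriv L (skolemizeFrom c' (F.substConsts l c))) :
    F ∈ L := by
  set l := F.finite_freeIn.toFinset.toList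
  have hclosed : (F.alls l).Closed := fun z hz => by
    obtain ⟨hzl, hzF⟩ := Fml.freeIn_alls.1 hz
    exact hzl (by simpa [l] using hzF)
  obtain ⟨c, hc⟩ := (F.alls l).eventually_funcBelow.exists
  have hsk : skolemizeFrom c (F.alls l) ∈ L := by
    rw [skolemizeFrom_alls (Finset.nodup_toList _)]
    exact hL _ (hF l c _)
  exact hL _ (Deriv.of_alls (Deriv.ax (hSk _ hclosed c hc hsk)))

theorem exists_substConsts_eq {P : Fml → Fml → Fml} {x : ℕ}
    (hfree : ∀ A B, ¬ Fml.FreeIn x B → ¬ Fml.FreeIn x (P A B))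
    (hsubst : ∀ A B y t, x ≠ y → (P A B).subst y t = P (A.subst y t) (B.subst y t)) :
    ∀ (l : List ℕ) (c : ℕ) {A B : Fml}, ¬ Fml.FreeIn x B →
      ∃ A' B', ¬ Fml.FreeIn x B' ∧ (P A B).substConsts l c = P A' B'
  | [], _, A, B, hB => ⟨A, B, hB, rfl⟩
  | y :: ys, c, A, B, hB => by
    rw [Fml.substConsts]
    by_cases hxy : x = y
    · rw [Fml.subst_of_not_freeIn _ (hxy ▸ hfree A B hB)]
      exact exists_substConsts_eq hfree hsubst ys (c + 1) hB
    · rw [hsubst A B y _ hxy]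
      exact exists_substConsts_eq hfree hsubst ys (c + 1) (Fml.not_freeIn_subst_const hB)

/-- What the argument needs of a quantifier shift schema such as `CD`, `ED` or `SW`. -/
structure SkolemDerivableSchema (L : Set Fml) (x : ℕ) (P : Fml → Fml → Fml) : Prop where
  not_freeIn : ∀ A B, ¬ Fml.FreeIn x B → ¬ Fml.FreeIn x (P A B)
  subst_eq : ∀ A B y t, x ≠ y → (P A B).subst y t = P (A.subst y t) (B.subst y t)
  deriv_skolemizeFrom : ∀ A B, ¬ Fml.FreeIn x B → ∀ c, Deriv L (skolemizeFrom c (P A B))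

theorem SkolemDerivableSchema.mem {L : Set Fml} {x : ℕ} {P : Fml → Fml → Fml}
    (hP : SkolemDerivableSchema L x P) (hL : ∀ A, Deriv L A → A ∈ L)
    (hSk : ∀ A : Fml, A.Closed → ∀ c : ℕ, A.FuncBelow c → skolemizeFrom c A ∈ L → A ∈ L)
    {A B : Fml} (hB : ¬ Fml.FreeIn x B) : P A B ∈ L :=
  mem_of_forall_deriv_skolemizeFrom_substConsts hL hSk fun l c c' => by
    obtain ⟨A', B', hB', heq⟩ := exists_substConsts_eq hP.not_freeIn hP.subst_eq l c hB
    exact heq ▸ hP.deriv_skolemizeFrom A' B' hB' c'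

namespace Fml

def cd (x : ℕ) (A B : Fml) : Fml := .imp (.all x (.or A B)) (.or (.all x A) B)

def ed (x : ℕ) (A B : Fml) : Fml := .imp (.imp B (.ex x A)) (.ex x (.imp B A))

def sw (x : ℕ) (A B : Fml) : Fml := .imp (.imp (.all x A) B) (.ex x (.imp A B))

end Fml

section QuantifierShifts

open Deriv Fml

variable {L : Set Fml} {x : ℕ} {A B : Fml}

theorem deriv_skolemizeFrom_cd (hB : ¬ FreeIn x B) (c : ℕ) :
    Deriv L (skolemizeFrom c (cd x A B)) := by
  rw [skolemizeFrom, show (cd x A B).size = 2 * A.size + 2 * B.size + 2 + 3 by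
    simp only [cd, size]; omega]
  exact (all_mono (or_mono (deriv_skAux_false_imp _ _ (by omega))
      (deriv_skAux_false_imp _ _ (by omega)))).trans
    ((allE_or_of_not_freeIn hB _).trans (or_mono
      (deriv_imp_skAux_true _ _ (by rw [size_subst]; omega))
      (deriv_imp_skAux_true _ _ (by omega))))

-- The Skolem constant replacing `∃x A` witnesses `∃x (B → A)`.
theorem deriv_skolemizeFrom_ed (hB : ¬ FreeIn x B) (c : ℕ) :
    Deriv L (skolemizeFrom c (ed x A B)) := by
  rw [skolemizeFrom, show (ed x A B).size = 2 * A.size + 2 * B.size + 2 + 3 by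
    simp only [ed, size]; omega]
  exact (imp_mono
      ((subst_imp_of_not_freeIn hB _ (deriv_skAux_false_imp _ _ (by omega))).trans
        (deriv_imp_skAux_true _ _ (by omega)))
      ((deriv_skAux_false_imp (n := 2 * A.size + 2 * B.size + 2) _ _
        (by rw [size_subst]; omega)).trans
        (Deriv.subst x _ (deriv_imp_skAux_true _ _ (by omega))))).trans
    (exI_imp _)

-- The Skolem constant replacing `∀x A` witnesses `∃x (A → B)`.
theorem deriv_skolemizeFrom_sw (hB : ¬ FreeIn x B) (c : ℕ) :
    Deriv L (skolemizeFrom c (sw x A B)) := by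
  rw [skolemizeFrom, show (sw x A B).size = 2 * A.size + 2 * B.size + 2 + 3 by
    simp only [sw, size]; omega]
  exact (imp_mono
      ((Deriv.subst x _ (deriv_skAux_false_imp _ _ (by omega))).trans
        (deriv_imp_skAux_true _ _ (by rw [size_subst]; omega)))
      ((deriv_skAux_false_imp _ _ (by omega)).trans
        (imp_subst_of_not_freeIn hB _ (deriv_imp_skAux_true _ _ (by omega))))).trans
    (exI_imp _)

theorem skolemDerivableSchema_cd : SkolemDerivableSchema L x (cd x) :=
  ⟨fun _ _ hB => by simp [cd, hB], fun _ _ _ _ h => by simp [cd, Fml.subst, h],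
    fun _ _ => deriv_skolemizeFrom_cd⟩

theorem skolemDerivableSchema_ed : SkolemDerivableSchema L x (ed x) :=
  ⟨fun _ _ hB => by simp [ed, hB], fun _ _ _ _ h => by simp [ed, Fml.subst, h],
    fun _ _ => deriv_skolemizeFrom_ed⟩

theorem skolemDerivableSchema_sw : SkolemDerivableSchema L x (sw x) :=
  ⟨fun _ _ hB => by simp [sw, hB], fun _ _ _ _ h => by simp [sw, Fml.subst, h],
    fun _ _ => deriv_skolemizeFrom_sw⟩

end QuantifierShifts

/-- If an intermediate first-order logic `L` admits
structural Skolemization (for every closed formula `A` and fresh choice of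
Skolem symbols, `L ⊢ A` iff `L ⊢ A^S`), then `L` contains the quantifier
shift principles `CD`, `ED` and `SW`. -/
theorem quantifier_shifts_of_skolemization (L : Set Fml)
    (hL : IsIntermediate L)
    (hSk : ∀ A : Fml, A.Closed → ∀ c : ℕ, Fml.FuncBelow c A →
      (A ∈ L ↔ skolemizeFrom c A ∈ L)) :
    ∀ (A B : Fml) (x : ℕ), ¬ Fml.FreeIn x B →
      (Fml.imp (.all x (.or A B)) (.or (.all x A) B) ∈ L ∧
       Fml.imp (.imp B (.ex x A)) (.ex x (.imp B A)) ∈ L ∧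
       Fml.imp (.imp (.all x A) B) (.ex x (.imp A B)) ∈ L) := by
  intro A B x hB
  have hIQC : ∀ A, Deriv L A → A ∈ L := hL.2.2
  have hSk' := fun A hA c hc => (hSk A hA c hc).2
  exact ⟨skolemDerivableSchema_cd.mem hIQC hSk' hB, skolemDerivableSchema_ed.mem hIQC hSk' hB,
    skolemDerivableSchema_sw.mem hIQC hSk' hB⟩
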